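/- arXiv:2410.04264 — 3 statements merged into one kernel-verified Lean document; each statement's English description precedes it below -/
import Mathlib

section
/- (NC2 from the MP-operator) Let $T_{MP}$ be an MP-operator with constants $a_1, a_2 > 0$ on $L^2(q)$ with respect to indicator functions $\hat{f}_i$ of a balanced $C$-way partition, realized by a feature map $\Phi: \chi \to \mathbb{R}^p$ via $T_{MP}[f](x') = \int \Phi(x)^T\Phi(x') f(x) q(x)dx$. Define the class means $\mu_i = C \int \hat{f}_i(x)\Phi(x) q(x)dx \in \mathbb{R}^p$ and the global mean $\mu_g = \frac{1}{C}\sum_i \mu_i = \int \Phi(x) q(x)dx$. Then $(\mu_i - \mu_g)^T(\mu_j - \mu_g) = C a_2 (\delta_{ij} - 1/C)$ for all $i,j$. -/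
open MeasureTheory

/-- NC2 from the MP-operator: if the feature-kernel integral operator of
`Φ : χ → ℝ^p` is the MP-operator with constants `a₁, a₂ > 0` (relative to the
indicators of a balanced `C`-way partition), then the centered class means
satisfy `(μᵢ - μ_g)ᵀ(μⱼ - μ_g) = C a₂ (δᵢⱼ - 1/C)`. -/
theorem stmt_9 {Ω : Type*} [MeasurableSpace Ω] (μ : Measure Ω) [IsProbabilityMeasure μ]
    (C p : ℕ) (hC : 0 < C) (A : Fin C → Set Ω)
    (hmeas : ∀ i, MeasurableSet (A i))
    (hdisj : Pairwise (Function.onFun Disjoint A))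
    (hcover : ⋃ i, A i = Set.univ)
    (hbal : ∀ i, μ (A i) = 1 / C)
    (fhat : Fin C → Ω → ℝ) (hfhat : ∀ i, fhat i = (A i).indicator 1)
    (Φ : Fin p → Ω → ℝ) (hΦ : ∀ j, MemLp (Φ j) 2 μ)
    (a1 a2 : ℝ) (ha1 : 0 < a1) (ha2 : 0 < a2)
    -- the integral operator of the feature map:
    (T : (Ω → ℝ) → Ω → ℝ)
    (hT : ∀ g, T g = fun x => ∑ j, (∫ y, Φ j y * g y ∂μ) * Φ j x)
    -- `T` is the MP-operator `u ↦ a₁⟨1,u⟩1 + a₂ P(u)`: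
    (hMP1 : ∀ i, T (fhat i) =ᵐ[μ] fun x => a2 * fhat i x + (a1 - a2) / C)
    (hMP2 : ∀ g : Ω → ℝ, MemLp g 2 μ → (∀ i, ∫ x, g x * fhat i x ∂μ = 0) →
      T g =ᵐ[μ] fun _ => 0)
    -- class means and global mean:
    (μc : Fin C → Fin p → ℝ) (hμc : ∀ i j, μc i j = C * ∫ x, fhat i x * Φ j x ∂μ)
    (μg : Fin p → ℝ) (hμg : ∀ j, μg j = ∫ x, Φ j x ∂μ) :
    ∀ i j, ∑ k, (μc i k - μg k) * (μc j k - μg k)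
      = C * a2 * ((if i = j then (1 : ℝ) else 0) - 1 / C) := by
  have hCR : (C : ℝ) ≠ 0 := Nat.cast_ne_zero.mpr hC.ne'
  set b : Fin C → Fin p → ℝ := fun i k => ∫ x, fhat i x * Φ k x ∂μ with hb
  -- pointwise product with fhat is indicator
  have hfb : ∀ (i : Fin C) (g : Ω → ℝ),
      (fun x => fhat i x * g x) = (A i).indicator g := by
    intro i g
    funext x
    rw [hfhat]
    by_cases hx : x ∈ A i <;> simp [Set.indicator_apply, hx]
  have hfint : ∀ i, Integrable (fhat i) μ := by
    intro i
    rw [hfhat]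
    exact (integrable_const (1 : ℝ)).indicator (hmeas i)
  have hint : ∀ (i : Fin C) (g : Ω → ℝ), Integrable g μ →
      Integrable (fun x => fhat i x * g x) μ := by
    intro i g hg
    rw [hfb]
    exact hg.indicator (hmeas i)
  have hΦint : ∀ k, Integrable (Φ k) μ := fun k =>
    (hΦ k).integrable (by norm_num)
  -- partition of unity
  have hsum1 : ∀ x, ∑ l, fhat l x = 1 := by
    intro x
    obtain ⟨i₀, hi₀⟩ : ∃ i, x ∈ A i := by
      have : x ∈ ⋃ i, A i := hcover ▸ Set.mem_univ x
      exact Set.mem_iUnion.mp this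
    rw [Finset.sum_eq_single i₀]
    · simp [hfhat, hi₀]
    · intro l _ hne
      have hdl : Disjoint (A l) (A i₀) := hdisj hne
      have hxl : x ∉ A l := fun hxl => Set.disjoint_left.mp hdl hxl hi₀
      simp [hfhat, hxl]
    · intro h; exact absurd (Finset.mem_univ i₀) h
  -- integral of fhat
  have hIfhat : ∀ i, ∫ x, fhat i x ∂μ = 1 / C := by
    intro i
    rw [hfhat]
    rw [MeasureTheory.integral_indicator_one (hmeas i), measureReal_def, hbal]
    simp [ENNReal.toReal_div]
  -- integral of fhat i * fhat j
  have hff : ∀ i j, ∫ x, fhat i x * fhat j x ∂μ = (if i = j then (1:ℝ) else 0) / C := by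
    intro i j
    have hind : (fun x => fhat i x * fhat j x) = (A i ∩ A j).indicator 1 := by
      funext x
      rw [hfhat, hfhat]
      by_cases h1 : x ∈ A i <;> by_cases h2 : x ∈ A j <;>
        simp [Set.indicator_apply, h1, h2]
    rw [hind, MeasureTheory.integral_indicator_one ((hmeas i).inter (hmeas j))]
    by_cases hij : i = j
    · subst hij
      simp [measureReal_def, hbal, ENNReal.toReal_div]
    · have : A i ∩ A j = ∅ := Set.disjoint_iff_inter_eq_empty.mp (hdisj hij)
      simp [this, hij]
  -- global mean as sum of class integrals
  have hμg' : ∀ k, μg k = ∑ l, b l k := by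
    intro k
    rw [hμg]
    have h1 : (fun x => Φ k x) = fun x => ∑ l, fhat l x * Φ k x := by
      funext x
      rw [← Finset.sum_mul, hsum1, one_mul]
    calc ∫ x, Φ k x ∂μ = ∫ x, ∑ l, fhat l x * Φ k x ∂μ := by rw [h1]
      _ = ∑ l, ∫ x, fhat l x * Φ k x ∂μ :=
          integral_finset_sum _ (fun l _ => hint l (Φ k) (hΦint k))
      _ = ∑ l, b l k := rfl
  -- the key identity via T
  have key : ∀ i j, ∑ k, b i k * b j k
      = (a2 * (if i = j then (1:ℝ) else 0) + (a1 - a2) / C) / C := by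
    intro i j
    have h1 : ∫ x, fhat i x * T (fhat j) x ∂μ = ∑ k, b i k * b j k := by
      rw [hT]
      have h2 : (fun x => fhat i x * ∑ k, (∫ y, Φ k y * fhat j y ∂μ) * Φ k x)
          = fun x => ∑ k, b j k * (fhat i x * Φ k x) := by
        funext x
        rw [Finset.mul_sum]
        refine Finset.sum_congr rfl fun k _ => ?_
        have : (∫ y, Φ k y * fhat j y ∂μ) = b j k := by
          simp only [hb]
          congr 1
          funext y
          ring
        rw [this]; ring
      rw [h2, integral_finset_sum _ (fun k _ =>
        ((hint i (Φ k) (hΦint k)).const_mul (b j k)))]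
      refine Finset.sum_congr rfl fun k _ => ?_
      rw [integral_const_mul]
      ring
    have h2 : ∫ x, fhat i x * T (fhat j) x ∂μ
        = a2 * ((if i = j then (1:ℝ) else 0) / C) + (a1 - a2) / C * (1 / C) := by
      have hae : (fun x => fhat i x * T (fhat j) x)
          =ᵐ[μ] fun x => a2 * (fhat i x * fhat j x) + (a1 - a2) / C * fhat i x := by
        filter_upwards [hMP1 j] with x hx
        rw [hx]; ring
      rw [integral_congr_ae hae,
        integral_add ((hint i (fhat j) (hfint j)).const_mul a2)
          ((hfint i).const_mul _),
        integral_const_mul, integral_const_mul, hff, hIfhat]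
    rw [h1] at h2
    rw [h2]; ring
  -- derived sums
  have hbg : ∀ i', ∑ k, b i' k * (∑ l, b l k) = a1 / C := by
    intro i'
    have h1 : ∑ k, b i' k * (∑ l, b l k) = ∑ l, ∑ k, b i' k * b l k := by
      rw [Finset.sum_comm]
      exact Finset.sum_congr rfl fun k _ => Finset.mul_sum _ _ _
    rw [h1]
    simp only [key]
    rw [← Finset.sum_div, Finset.sum_add_distrib, ← Finset.mul_sum, Finset.sum_const]
    simp only [Finset.sum_ite_eq, Finset.mem_univ, if_true, Finset.card_univ,
      Fintype.card_fin, nsmul_eq_mul]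
    field_simp
    ring
  have hgg : ∑ k, (∑ l, b l k) * (∑ l, b l k) = a1 := by
    have h1 : ∑ k, (∑ l, b l k) * (∑ l, b l k)
        = ∑ l, ∑ k, b l k * (∑ m, b m k) := by
      rw [Finset.sum_comm]
      exact Finset.sum_congr rfl fun k _ => Finset.sum_mul _ _ _
    rw [h1]
    simp only [hbg]
    rw [Finset.sum_const, Finset.card_univ, Fintype.card_fin, nsmul_eq_mul]
    field_simp
  -- final computation
  intro i j
  have hrw : ∀ k, (μc i k - μg k) * (μc j k - μg k)
      = (C * C) * (b i k * b j k) - C * (b i k * (∑ l, b l k))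
        - C * (b j k * (∑ l, b l k)) + (∑ l, b l k) * (∑ l, b l k) := by
    intro k
    rw [hμc, hμc, hμg' k]
    ring
  calc ∑ k, (μc i k - μg k) * (μc j k - μg k)
      = ∑ k, ((C * C) * (b i k * b j k) - C * (b i k * (∑ l, b l k))
          - C * (b j k * (∑ l, b l k)) + (∑ l, b l k) * (∑ l, b l k)) :=
        Finset.sum_congr rfl fun k _ => hrw k
    _ = (C * C) * (∑ k, b i k * b j k) - C * (∑ k, b i k * (∑ l, b l k))
          - C * (∑ k, b j k * (∑ l, b l k))
          + ∑ k, (∑ l, b l k) * (∑ l, b l k) := by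
        rw [Finset.sum_add_distrib, Finset.sum_sub_distrib, Finset.sum_sub_distrib,
          ← Finset.mul_sum, ← Finset.mul_sum, ← Finset.mul_sum]
    _ = (C * C) * ((a2 * (if i = j then (1:ℝ) else 0) + (a1 - a2) / C) / C)
          - C * (a1 / C) - C * (a1 / C) + a1 := by
        rw [key i j, hbg i, hbg j, hgg]
    _ = C * a2 * ((if i = j then (1 : ℝ) else 0) - 1 / C) := by
        split_ifs with h <;> field_simp <;> ring
end

section
/- (NC1 from the MP-operator on a finite training set) Let $\chi = \{x^{(1)},\dots,x^{(n)}\}$ be a finite set with uniform measure $q$, partitioned into $C$ balanced classes $A_i$ with indicators $\hat{f}_i$, and let $\Phi: \chi \to \mathbb{R}^p$ be a feature map whose associated integral operator is an MP-operator $T_{MP}$ with constants $a_1, a_2 > 0$. Define class means $\mu_i$, global mean $\mu_g$, within-class scatter $\Sigma_W = \sum_i \sum_{x \in A_i}(\Phi(x) - \mu_i)(\Phi(x)-\mu_i)^T$ and between-class scatter $\Sigma_B = \sum_j (\mu_j - \mu_g)(\mu_j - \mu_g)^T$. Then $\mathrm{Tr}(\Sigma_W \Sigma_B^T) = 0$.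 -/
/-- NC1 from the MP-operator on a finite training set with uniform measure:
if the feature-kernel operator is the MP-operator for a balanced `C`-way
partition, then the within-class scatter is orthogonal to the between-class
scatter: `Tr(Σ_W Σ_Bᵀ) = 0`. -/
theorem stmt_10 {Ω : Type*} [Fintype Ω] [DecidableEq Ω]
    (n : ℕ) (hn : 0 < n) (hcard : Fintype.card Ω = n)
    (C p : ℕ) (hC : 0 < C)
    (A : Fin C → Finset Ω)
    (hdisj : Pairwise (Function.onFun Disjoint A))
    (hcover : ∀ x : Ω, ∃ i, x ∈ A i)
    (hbal : ∀ i, (A i).card * C = n)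
    (fhat : Fin C → Ω → ℝ)
    (hfhat : ∀ i x, fhat i x = if x ∈ A i then (1 : ℝ) else 0)
    (Φ : Fin p → Ω → ℝ)
    (a1 a2 : ℝ) (ha1 : 0 < a1) (ha2 : 0 < a2)
    -- the integral operator of the feature map w.r.t. the uniform measure:
    (T : (Ω → ℝ) → Ω → ℝ)
    (hT : ∀ g, T g = fun x => ∑ j, ((1 / (n : ℝ)) * ∑ y, Φ j y * g y) * Φ j x)
    -- `T` is the MP-operator:
    (hMP1 : ∀ i x, T (fhat i) x = a2 * fhat i x + (a1 - a2) / C)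
    (hMP2 : ∀ g : Ω → ℝ, (∀ i, (1 / (n : ℝ)) * ∑ x, g x * fhat i x = 0) →
      ∀ x, T g x = 0)
    -- class means, global mean, and the scatter matrices:
    (μc : Fin C → Fin p → ℝ)
    (hμc : ∀ i j, μc i j = ((C : ℝ) / n) * ∑ x ∈ A i, Φ j x)
    (μg : Fin p → ℝ) (hμg : ∀ j, μg j = (1 / (C : ℝ)) * ∑ i, μc i j)
    (SW : Fin p → Fin p → ℝ)
    (hSW : ∀ a b, SW a b = ∑ i, ∑ x ∈ A i, (Φ a x - μc i a) * (Φ b x - μc i b))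
    (SB : Fin p → Fin p → ℝ)
    (hSB : ∀ a b, SB a b = ∑ j, (μc j a - μg a) * (μc j b - μg b)) :
    ∑ a, ∑ b, SW a b * SB a b = 0 := by
  have hC' : (C : ℝ) ≠ 0 := Nat.cast_ne_zero.mpr hC.ne'
  have hn' : (n : ℝ) ≠ 0 := Nat.cast_ne_zero.mpr hn.ne'
  -- indicator values on class members
  have hmemfhat : ∀ i : Fin C, ∀ x ∈ A i, ∀ j,
      fhat j x = if j = i then (1 : ℝ) else 0 := by
    intro i x hx j
    rw [hfhat]
    by_cases h : j = i
    · subst h; simp [hx]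
    · have hnot : x ∉ A j := Finset.disjoint_right.mp (hdisj h) hx
      simp [hnot, h]
  -- key1 : ⟨Φ(x), μc j⟩ = a2 C fhat j x + (a1 - a2)
  have key1 : ∀ (j : Fin C) (x : Ω),
      ∑ a, Φ a x * μc j a = a2 * C * fhat j x + (a1 - a2) := by
    intro j x
    have hfsum : ∀ a : Fin p, ∑ y, Φ a y * fhat j y = ∑ y ∈ A j, Φ a y := by
      intro a
      simp [hfhat, mul_ite, mul_one, mul_zero, Finset.sum_ite_mem]
    have h1 : ∑ a, Φ a x * μc j a = (C : ℝ) * T (fhat j) x := by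
      rw [hT]
      simp only
      rw [Finset.mul_sum]
      refine Finset.sum_congr rfl fun a _ => ?_
      rw [hμc, ← hfsum]
      field_simp
    rw [h1, hMP1]
    field_simp
  -- key2 : indicators sum to 1
  have key2 : ∀ x : Ω, ∑ j, fhat j x = 1 := by
    intro x
    obtain ⟨i, hi⟩ := hcover x
    rw [Finset.sum_eq_single i]
    · rw [hmemfhat i x hi i]; simp
    · intro j _ hj; rw [hmemfhat i x hi j]; simp [hj]
    · simp
  -- key3 : ⟨Φ(x), μg⟩ = a1
  have key3 : ∀ x : Ω, ∑ a, Φ a x * μg a = a1 := by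
    intro x
    have h : ∑ a, Φ a x * μg a
        = (1 / (C : ℝ)) * ∑ i, ∑ a, Φ a x * μc i a := by
      calc ∑ a, Φ a x * μg a
          = ∑ a, ∑ i, (1 / (C : ℝ)) * (Φ a x * μc i a) := by
            refine Finset.sum_congr rfl fun a _ => ?_
            rw [hμg, Finset.mul_sum, Finset.mul_sum]
            exact Finset.sum_congr rfl fun i _ => by ring
        _ = ∑ i, ∑ a, (1 / (C : ℝ)) * (Φ a x * μc i a) := Finset.sum_comm
        _ = (1 / (C : ℝ)) * ∑ i, ∑ a, Φ a x * μc i a := by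
            rw [Finset.mul_sum]
            exact Finset.sum_congr rfl fun i _ => (Finset.mul_sum _ _ _).symm
    rw [h]
    have h2 : ∑ i, ∑ a, Φ a x * μc i a = a2 * C * 1 + C * (a1 - a2) := by
      simp_rw [key1]
      rw [Finset.sum_add_distrib, ← Finset.mul_sum, key2]
      simp [mul_comm]
      ring
    rw [h2]
    field_simp
    ring
  -- key5 : ⟨Φ(x), μc j - μg⟩
  have key5 : ∀ (j : Fin C) (x : Ω),
      ∑ a, Φ a x * (μc j a - μg a) = a2 * C * fhat j x - a2 := by
    intro j x
    have : ∑ a, Φ a x * (μc j a - μg a)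
        = (∑ a, Φ a x * μc j a) - ∑ a, Φ a x * μg a := by
      rw [← Finset.sum_sub_distrib]
      exact Finset.sum_congr rfl fun a _ => by ring
    rw [this, key1, key3]
    ring
  -- key6 : ⟨μc i, μc j - μg⟩
  have key6 : ∀ i j : Fin C,
      ∑ a, μc i a * (μc j a - μg a)
        = a2 * C * (if j = i then (1 : ℝ) else 0) - a2 := by
    intro i j
    have h : ∑ a, μc i a * (μc j a - μg a)
        = ((C : ℝ) / n) * ∑ y ∈ A i, ∑ a, Φ a y * (μc j a - μg a) := by
      calc ∑ a, μc i a * (μc j a - μg a)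
          = ∑ a, ∑ y ∈ A i, ((C : ℝ) / n) * (Φ a y * (μc j a - μg a)) := by
            refine Finset.sum_congr rfl fun a _ => ?_
            rw [hμc, Finset.mul_sum, Finset.sum_mul]
            exact Finset.sum_congr rfl fun y _ => by ring
        _ = ∑ y ∈ A i, ∑ a, ((C : ℝ) / n) * (Φ a y * (μc j a - μg a)) :=
            Finset.sum_comm
        _ = ((C : ℝ) / n) * ∑ y ∈ A i, ∑ a, Φ a y * (μc j a - μg a) := by
            rw [Finset.mul_sum]
            exact Finset.sum_congr rfl fun y _ => (Finset.mul_sum _ _ _).symm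
    rw [h]
    have h2 : ∀ y ∈ A i, ∑ a, Φ a y * (μc j a - μg a)
        = a2 * C * (if j = i then (1 : ℝ) else 0) - a2 := by
      intro y hy
      rw [key5, hmemfhat i y hy j]
    rw [Finset.sum_congr rfl h2, Finset.sum_const, nsmul_eq_mul]
    have hcardA : ((A i).card : ℝ) * C = n := by
      exact_mod_cast congrArg (Nat.cast : ℕ → ℝ) (hbal i)
    have : (C : ℝ) / n * (A i).card = 1 := by
      field_simp
      linarith [hcardA]
    rw [← mul_assoc, this, one_mul]
  -- key : orthogonality of within-class deviations and between-class directions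
  have key : ∀ i : Fin C, ∀ x ∈ A i, ∀ j : Fin C,
      ∑ a, (Φ a x - μc i a) * (μc j a - μg a) = 0 := by
    intro i x hx j
    have h : ∑ a, (Φ a x - μc i a) * (μc j a - μg a)
        = (∑ a, Φ a x * (μc j a - μg a)) - ∑ a, μc i a * (μc j a - μg a) := by
      rw [← Finset.sum_sub_distrib]
      exact Finset.sum_congr rfl fun a _ => by ring
    rw [h, key5, key6, hmemfhat i x hx j]
    ring
  -- inner : columns of SW are orthogonal to the directions μc j - μg
  have inner : ∀ (j : Fin C) (b : Fin p),
      ∑ a, SW a b * (μc j a - μg a) = 0 := by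
    intro j b
    have h : ∑ a, SW a b * (μc j a - μg a)
        = ∑ i, ∑ x ∈ A i, (Φ b x - μc i b)
            * ∑ a, (Φ a x - μc i a) * (μc j a - μg a) := by
      simp_rw [hSW, Finset.sum_mul]
      rw [Finset.sum_comm]
      refine Finset.sum_congr rfl fun i _ => ?_
      rw [Finset.sum_comm]
      refine Finset.sum_congr rfl fun x _ => ?_
      rw [Finset.mul_sum]
      exact Finset.sum_congr rfl fun a _ => by ring
    rw [h]
    refine Finset.sum_eq_zero fun i _ => Finset.sum_eq_zero fun x hx => ?_
    rw [key i x hx j, mul_zero]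
  -- conclude
  have hfin : ∑ a, ∑ b, SW a b * SB a b
      = ∑ j, ∑ b, (∑ a, SW a b * (μc j a - μg a)) * (μc j b - μg b) := by
    calc ∑ a, ∑ b, SW a b * SB a b
        = ∑ a, ∑ b, ∑ j, SW a b * ((μc j a - μg a) * (μc j b - μg b)) := by
          refine Finset.sum_congr rfl fun a _ => Finset.sum_congr rfl fun b _ => ?_
          rw [hSB, Finset.mul_sum]
      _ = ∑ a, ∑ j, ∑ b, SW a b * ((μc j a - μg a) * (μc j b - μg b)) :=
          Finset.sum_congr rfl fun a _ => Finset.sum_comm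
      _ = ∑ j, ∑ a, ∑ b, SW a b * ((μc j a - μg a) * (μc j b - μg b)) :=
          Finset.sum_comm
      _ = ∑ j, ∑ b, ∑ a, SW a b * ((μc j a - μg a) * (μc j b - μg b)) :=
          Finset.sum_congr rfl fun j _ => Finset.sum_comm
      _ = ∑ j, ∑ b, (∑ a, SW a b * (μc j a - μg a)) * (μc j b - μg b) := by
          refine Finset.sum_congr rfl fun j _ => Finset.sum_congr rfl fun b _ => ?_
          rw [Finset.sum_mul]
          exact Finset.sum_congr rfl fun a _ => by ring
  rw [hfin]
  refine Finset.sum_eq_zero fun j _ => Finset.sum_eq_zero fun b _ => ?_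
  rw [inner j b, zero_mul]
end

section
/- Let $\{A_1,\dots,A_C\}$ be a balanced partition of a finite probability space $(\chi, q)$ with indicators $\hat{f}_i$, and suppose the feature map operator is the MP-operator with constants $a_1, a_2 > 0$. For $x \in A_i$, the feature vector satisfies $(\Phi(x) - \mu_i)^T(\mu_j - \mu_g) = a_2 C(\hat{f}_j(x) - \delta_{ij})$ for all classes $j$; in particular, for $x \in A_i$ and $j = i$ this quantity is $a_2 C(\hat{f}_i(x) - 1) = 0$, so every within-class deviation $\Phi(x) - \mu_i$ (for $x \in A_i$) is orthogonal to its own centered class mean $\mu_i - \mu_g$. -/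
/-- On a finite probability space carrying a balanced `C`-way partition, if the
feature-kernel operator is the MP-operator then for every `x ∈ Aᵢ` and every
class `j`, `(Φ(x) - μᵢ)ᵀ(μⱼ - μ_g) = a₂ C (f̂ⱼ(x) - δᵢⱼ)`; in particular every
within-class deviation is orthogonal to its own centered class mean. -/
theorem stmt_19 {Ω : Type*} [Fintype Ω] [DecidableEq Ω]
    (w : Ω → ℝ) (hw : ∀ x, 0 ≤ w x) (hw1 : ∑ x, w x = 1)
    (C p : ℕ) (hC : 0 < C)
    (A : Fin C → Finset Ω)
    (hdisj : Pairwise (Function.onFun Disjoint A))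
    (hcover : ∀ x : Ω, ∃ i, x ∈ A i)
    (hbal : ∀ i, ∑ x ∈ A i, w x = 1 / C)
    (fhat : Fin C → Ω → ℝ)
    (hfhat : ∀ i x, fhat i x = if x ∈ A i then (1 : ℝ) else 0)
    (Φ : Fin p → Ω → ℝ)
    (a1 a2 : ℝ) (ha1 : 0 < a1) (ha2 : 0 < a2)
    -- the integral operator of the feature map w.r.t. the measure `w`:
    (T : (Ω → ℝ) → Ω → ℝ)
    (hT : ∀ g, T g = fun x => ∑ j, (∑ y, w y * (Φ j y * g y)) * Φ j x)
    -- `T` is the MP-operator: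
    (hMP1 : ∀ i x, T (fhat i) x = a2 * fhat i x + (a1 - a2) / C)
    (hMP2 : ∀ g : Ω → ℝ, (∀ i, ∑ x, w x * (g x * fhat i x) = 0) → ∀ x, T g x = 0)
    -- class means and global mean:
    (μc : Fin C → Fin p → ℝ)
    (hμc : ∀ i j, μc i j = C * ∑ x, w x * (fhat i x * Φ j x))
    (μg : Fin p → ℝ) (hμg : ∀ j, μg j = ∑ x, w x * Φ j x) :
    (∀ i j, ∀ x ∈ A i, ∑ k, (Φ k x - μc i k) * (μc j k - μg k)
        = a2 * C * (fhat j x - if i = j then (1 : ℝ) else 0)) ∧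
    (∀ i, ∀ x ∈ A i, ∑ k, (Φ k x - μc i k) * (μc i k - μg k) = 0) := by
  have hCne : (C : ℝ) ≠ 0 := Nat.cast_ne_zero.mpr hC.ne'
  -- the indicators sum to 1
  have hone : ∀ x : Ω, ∑ i, fhat i x = 1 := by
    intro x
    obtain ⟨i0, hi0⟩ := hcover x
    rw [Finset.sum_eq_single i0]
    · simp [hfhat, hi0]
    · intro j _ hj
      rw [hfhat, if_neg]
      exact fun hx => (Finset.disjoint_left.mp (hdisj hj) hx) hi0
    · simp
  have hprod : ∀ i j y, fhat i y * fhat j y = if i = j then fhat i y else 0 := by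
    intro i j y
    rcases eq_or_ne i j with h | h
    · subst h
      rw [if_pos rfl, hfhat]
      split_ifs <;> ring
    · rw [if_neg h, hfhat, hfhat]
      split_ifs with h1 h2
      · exact absurd h2 (Finset.disjoint_left.mp (hdisj h) h1)
      all_goals ring
  have hS2 : ∀ i, ∑ y, w y * fhat i y = 1 / (C : ℝ) := by
    intro i
    simp only [hfhat, mul_ite, mul_one, mul_zero]
    rw [Finset.sum_ite_mem, Finset.univ_inter, hbal]
  have hS1 : ∀ i j, ∑ y, w y * (fhat i y * fhat j y)
      = if i = j then 1 / (C : ℝ) else 0 := by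
    intro i j
    rcases eq_or_ne i j with h | h
    · simp only [hprod, if_pos h, hS2 i]
    · simp only [hprod, if_neg h, mul_zero, Finset.sum_const_zero]
  have hMP1' : ∀ i x, ∑ k, (∑ y, w y * (Φ k y * fhat i y)) * Φ k x
      = a2 * fhat i x + (a1 - a2) / C := by
    intro i x
    have := hMP1 i x
    rw [hT] at this
    exact this
  -- Φ(x)ᵀ μc j
  have e1 : ∀ j x, ∑ k, Φ k x * μc j k = (C : ℝ) * (a2 * fhat j x + (a1 - a2) / C) := by
    intro j x
    rw [← hMP1' j x, Finset.mul_sum]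
    refine Finset.sum_congr rfl fun k _ => ?_
    rw [hμc]
    have h : (∑ y, w y * (fhat j y * Φ k y)) = ∑ y, w y * (Φ k y * fhat j y) :=
      Finset.sum_congr rfl fun y _ => by ring
    rw [h]; ring
  -- Φ(x)ᵀ μg
  have e2 : ∀ x, ∑ k, Φ k x * μg k = a1 := by
    intro x
    have h : ∑ k, Φ k x * μg k
        = ∑ i, ∑ k, (∑ y, w y * (Φ k y * fhat i y)) * Φ k x := by
      rw [Finset.sum_comm]
      refine Finset.sum_congr rfl fun k _ => ?_
      rw [hμg, ← Finset.sum_mul, mul_comm]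
      congr 1
      rw [Finset.sum_comm]
      refine Finset.sum_congr rfl fun y _ => ?_
      rw [← Finset.mul_sum, ← Finset.mul_sum, hone, mul_one]
    rw [h]
    simp only [hMP1']
    rw [Finset.sum_add_distrib, ← Finset.mul_sum, hone, Finset.sum_const,
      Finset.card_univ, Fintype.card_fin, mul_one, nsmul_eq_mul]
    field_simp
    ring
  -- key identity 1
  have key1 : ∀ j x, ∑ k, Φ k x * (μc j k - μg k) = a2 * ((C : ℝ) * fhat j x - 1) := by
    intro j x
    simp only [mul_sub, Finset.sum_sub_distrib, e1, e2]
    field_simp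
    ring
  -- key identity 2
  have key2 : ∀ i j, ∑ k, μc i k * (μc j k - μg k)
      = a2 * ((C : ℝ) * (if i = j then (1 : ℝ) else 0) - 1) := by
    intro i j
    have step : ∀ k, μc i k * (μc j k - μg k)
        = ∑ y, (C : ℝ) * (w y * (fhat i y * (Φ k y * (μc j k - μg k)))) := by
      intro k
      rw [hμc, mul_assoc, Finset.sum_mul, Finset.mul_sum]
      exact Finset.sum_congr rfl fun y _ => by ring
    calc ∑ k, μc i k * (μc j k - μg k)
        = ∑ k, ∑ y, (C : ℝ) * (w y * (fhat i y * (Φ k y * (μc j k - μg k)))) :=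
          Finset.sum_congr rfl fun k _ => step k
      _ = ∑ y, (C : ℝ) * (w y * (fhat i y * (∑ k, Φ k y * (μc j k - μg k)))) := by
          rw [Finset.sum_comm]
          exact Finset.sum_congr rfl fun y _ => by simp only [Finset.mul_sum]
      _ = ∑ y, ((C : ℝ) * (C : ℝ) * a2 * (w y * (fhat i y * fhat j y))
            - (C : ℝ) * a2 * (w y * fhat i y)) := by
          refine Finset.sum_congr rfl fun y _ => ?_
          rw [key1 j y]; ring
      _ = (C : ℝ) * (C : ℝ) * a2 * (∑ y, w y * (fhat i y * fhat j y))
            - (C : ℝ) * a2 * (∑ y, w y * fhat i y) := by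
          rw [Finset.sum_sub_distrib, Finset.mul_sum, Finset.mul_sum]
      _ = a2 * ((C : ℝ) * (if i = j then (1 : ℝ) else 0) - 1) := by
          rw [hS1, hS2]
          split_ifs <;> field_simp <;> ring
  have main : ∀ i j, ∀ x ∈ A i, ∑ k, (Φ k x - μc i k) * (μc j k - μg k)
      = a2 * C * (fhat j x - if i = j then (1 : ℝ) else 0) := by
    intro i j x _
    have h : ∑ k, (Φ k x - μc i k) * (μc j k - μg k)
        = (∑ k, Φ k x * (μc j k - μg k)) - ∑ k, μc i k * (μc j k - μg k) := by
      rw [← Finset.sum_sub_distrib]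
      exact Finset.sum_congr rfl fun k _ => by ring
    rw [h, key1, key2]
    ring
  refine ⟨main, fun i x hx => ?_⟩
  rw [main i i x hx, if_pos rfl, hfhat, if_pos hx]
  ring
end
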